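/- arXiv:1604.01079 — 2 statements merged into one kernel-verified Lean document; each statement's English description precedes it below -/
import Mathlib

section
/- Let E be a directed graph, c a cycle without exits, and H the saturated closure of c^0. If F_E(c^0) is finite, then H is a finite set of vertices. -/
/-- A directed graph: vertices, edges, source and range maps. -/
structure DirGraph where
  V : Type
  E : Type
  s : E → V
  r : E → V

/-- A walk: a candidate finite path, given by a source vertex and a list of edges. -/
structure Walk (G : DirGraph) where
  src : G.V
  edges : List G.E

/-- The range (final vertex) of a walk. -/
def Walk.rng {G : DirGraph} (p : Walk G) : G.V :=
  match p.edges.getLast? with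
  | none => p.src
  | some e => G.r e

/-- Appending two walks. -/
def Walk.append {G : DirGraph} (p q : Walk G) : Walk G := ⟨p.src, p.edges ++ q.edges⟩

/-- The `n`-fold power of a walk (concatenation with itself). -/
def Walk.pow {G : DirGraph} (c : Walk G) (n : ℕ) : Walk G :=
  ⟨c.src, (List.replicate n c.edges).flatten⟩

namespace DirGraph
variable (G : DirGraph)

/-- A walk is a genuine finite path: the first edge starts at the source and
consecutive edges match up. -/
def IsPath (p : Walk G) : Prop :=
  (∀ e, p.edges.head? = some e → G.s e = p.src) ∧
    p.edges.Chain' (fun a b => G.r a = G.s b)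

/-- A subset of vertices is hereditary. -/
def Hereditary (H : Set G.V) : Prop :=
  ∀ p : Walk G, G.IsPath p → p.src ∈ H → p.rng ∈ H

/-- A regular vertex: emits at least one and finitely many edges. -/
def Regular (v : G.V) : Prop :=
  {e | G.s e = v}.Finite ∧ {e | G.s e = v}.Nonempty

/-- A subset of vertices is saturated. -/
def Saturated (H : Set G.V) : Prop :=
  ∀ v, G.Regular v → (∀ e, G.s e = v → G.r e ∈ H) → v ∈ H

/-- The saturated closure: the smallest hereditary and saturated set containing `H`. -/
def satClosure (H : Set G.V) : Set G.V :=
  ⋂₀ {K | H ⊆ K ∧ G.Hereditary K ∧ G.Saturated K}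

/-- The set of vertices of a walk (sources of its edges). -/
def verts (c : Walk G) : Set G.V := {v | ∃ e ∈ c.edges, G.s e = v}

/-- A cycle: a nontrivial closed path with no repeated vertices except the base. -/
def IsCycle (c : Walk G) : Prop :=
  G.IsPath c ∧ c.edges ≠ [] ∧ c.rng = c.src ∧ (c.edges.map G.s).Nodup

/-- A cycle (or walk) has no exits: each vertex on it emits only the edge of the walk. -/
def NoExits (c : Walk G) : Prop :=
  ∀ e ∈ c.edges, ∀ e', G.s e' = G.s e → e' = e

/-- `F_E(H)`: paths reaching `H` exactly at their final vertex. -/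
def FE (H : Set G.V) : Set (Walk G) :=
  {α | G.IsPath α ∧ α.edges ≠ [] ∧ α.src ∉ H ∧
       (∀ e ∈ α.edges.dropLast, G.r e ∉ H) ∧ α.rng ∈ H}

/-- The breaking vertices of `H`. -/
def BH (H : Set G.V) : Set G.V :=
  {v | v ∉ H ∧ {e | G.s e = v}.Infinite ∧
       {e | G.s e = v ∧ G.r e ∉ H}.Nonempty ∧ {e | G.s e = v ∧ G.r e ∉ H}.Finite}

/-- `F_E'(H)`: members of `F_E(H)` whose last edge has source not a breaking vertex. -/
def FE' (H : Set G.V) : Set (Walk G) :=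
  {α | α ∈ G.FE H ∧ ∀ e, α.edges.getLast? = some e → G.s e ∉ G.BH H}

/-- Condition (F): `H ∪ F_E'(H) ∪ {α ∈ Path(E) : r(α) ∈ B_H}` is finite. -/
def ConditionF (H : Set G.V) : Prop :=
  H.Finite ∧ (G.FE' H).Finite ∧ {α : Walk G | G.IsPath α ∧ α.rng ∈ G.BH H}.Finite

/-- An infinite path, given by its sequence of edges. -/
def IsInfPath (x : ℕ → G.E) : Prop := ∀ i, G.r (x i) = G.s (x (i + 1))

/-- The edge sequence of the concatenation of a finite walk with an infinite edge sequence. -/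
def concatSeq (p : Walk G) (x : ℕ → G.E) : ℕ → G.E := fun n =>
  if h : n < p.edges.length then p.edges.get ⟨n, h⟩ else x (n - p.edges.length)

end DirGraph

/-!
Since `c` has no exits, every edge leaving `c⁰` is an edge of `c`, so `c⁰` is closed under ranges
of edges. Hence the saturation of `c⁰` (the vertices obtained from `c⁰` by repeatedly adding regular
vertices all of whose edges land in the set) is already hereditary, and so contains the saturated
closure. A vertex added by saturation outside `c⁰` is the source of a path through saturated
vertices that enters `c⁰` only at its end, that is, of a path in `F_E(c⁰)`. So the saturated closure
lies in `c⁰ ∪ s(F_E(c⁰))`, which is finite.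
-/

theorem List.IsChain.exists_rel_or_getLast?_eq {α : Type*} {R : α → α → Prop} {l : List α}
    (hl : l.IsChain R) {a : α} (ha : a ∈ l) : (∃ b ∈ l, R a b) ∨ l.getLast? = some a := by
  induction l with
  | nil => simp at ha
  | cons x l ih =>
    rw [List.isChain_cons] at hl
    cases l with
    | nil => simp_all
    | cons y l =>
      rcases List.mem_cons.mp ha with rfl | ha
      · exact Or.inl ⟨y, by simp, hl.1 y rfl⟩
      · rcases ih hl.2 ha with ⟨b, hb, hab⟩ | hlast
        · exact Or.inl ⟨b, List.mem_cons_of_mem _ hb, hab⟩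
        · exact Or.inr (by rwa [List.getLast?_cons_cons])

namespace DirGraph

variable {G : DirGraph}

theorem rng_cons {v : G.V} {e : G.E} {l : List G.E} (hl : l ≠ []) (w : G.V) :
    Walk.rng ⟨v, e :: l⟩ = Walk.rng ⟨w, l⟩ := by
  simp only [Walk.rng, List.getLast?_eq_some_getLast hl,
    List.getLast?_eq_some_getLast (List.cons_ne_nil e l), List.getLast_cons hl]

theorem hereditary_of_forall_rng_mem {S : Set G.V} (hS : ∀ e, G.s e ∈ S → G.r e ∈ S) :
    G.Hereditary S := by
  suffices key : ∀ (l : List G.E) (v : G.V), G.IsPath ⟨v, l⟩ → v ∈ S → Walk.rng ⟨v, l⟩ ∈ S from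
    fun p hp hsrc => key p.edges p.src hp hsrc
  intro l
  induction l with
  | nil => exact fun v _ hv => hv
  | cons e l ih =>
    rintro v ⟨hhead, hchain⟩ hv
    rw [List.Chain', List.isChain_cons] at hchain
    have hre : G.r e ∈ S := hS e (by rwa [hhead e rfl])
    rcases eq_or_ne l [] with rfl | hl
    · exact hre
    · rw [rng_cons hl (G.r e)]
      exact ih (G.r e) ⟨fun a ha => (hchain.1 a (by simpa using ha)).symm, hchain.2⟩ hre

theorem verts_finite (c : Walk G) : (G.verts c).Finite :=
  (c.edges.finite_toSet.image G.s).subset fun _ ⟨e, he, hv⟩ => ⟨e, he, hv⟩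

theorem rng_mem_verts_of_noExits {c : Walk G} (hpath : G.IsPath c) (hclosed : c.rng = c.src)
    (hne : G.NoExits c) {e : G.E} (he : G.s e ∈ G.verts c) : G.r e ∈ G.verts c := by
  obtain ⟨e', he', hse⟩ := he
  obtain rfl : e = e' := hne e' he' e hse.symm
  have hchain : c.edges.IsChain (fun a b => G.r a = G.s b) := hpath.2
  rcases hchain.exists_rel_or_getLast?_eq he' with ⟨b, hb, hrb⟩ | hlast
  · exact ⟨b, hb, hrb.symm⟩
  · obtain ⟨a, l, hcons⟩ := List.exists_cons_of_ne_nil (List.ne_nil_of_mem he')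
    have hrng : c.rng = G.r e := by simp only [Walk.rng, hlast]
    refine ⟨a, by simp [hcons], ?_⟩
    rw [hpath.1 a (by simp [hcons]), ← hclosed, hrng]

variable (G) in
inductive Saturation (X : Set G.V) : G.V → Prop
  | base {v} : v ∈ X → Saturation X v
  | regular {v} : G.Regular v → (∀ e, G.s e = v → Saturation X (G.r e)) → Saturation X v

theorem Saturation.rng {X : Set G.V} (hX : ∀ e, G.s e ∈ X → G.r e ∈ X) {v : G.V}
    (hv : G.Saturation X v) {e : G.E} (he : G.s e = v) : G.Saturation X (G.r e) := by
  cases hv with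
  | base hv => exact .base (hX e (he ▸ hv))
  | regular _ h => exact h e he

theorem satClosure_subset_saturation {X : Set G.V} (hX : ∀ e, G.s e ∈ X → G.r e ∈ X) :
    G.satClosure X ⊆ {v | G.Saturation X v} :=
  Set.sInter_subset_of_mem ⟨fun _ => .base,
    hereditary_of_forall_rng_mem fun _ he => he.rng hX rfl, fun _ hreg h => .regular hreg h⟩

theorem singleton_mem_FE {X : Set G.V} {e : G.E} (hs : G.s e ∉ X) (hr : G.r e ∈ X) :
    (⟨G.s e, [e]⟩ : Walk G) ∈ G.FE X :=
  ⟨⟨fun _ h => by cases Option.some_inj.mp h; rfl, List.isChain_singleton _⟩, by simp, hs,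
    by simp, hr⟩

theorem cons_mem_FE {X : Set G.V} {e : G.E} {α : Walk G} (hα : α ∈ G.FE X) (hs : G.s e ∉ X)
    (hr : α.src = G.r e) : (⟨G.s e, e :: α.edges⟩ : Walk G) ∈ G.FE X := by
  obtain ⟨⟨hhead, hchain⟩, hne, hsrc, hdrop, hrng⟩ := hα
  refine ⟨⟨fun _ h => by cases Option.some_inj.mp h; rfl, ?_⟩, by simp, hs, ?_, ?_⟩
  · rw [List.Chain', List.isChain_cons]
    exact ⟨fun a ha => by rw [hhead a (by simpa using ha), hr], hchain⟩
  · rw [List.dropLast_cons_of_ne_nil hne]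
    intro a ha
    rcases List.mem_cons.mp ha with rfl | ha
    · exact hr ▸ hsrc
    · exact hdrop a ha
  · rwa [rng_cons hne α.src]

theorem mem_or_mem_src_FE_of_saturation {X : Set G.V} {v : G.V} (hv : G.Saturation X v) :
    v ∈ X ∪ Walk.src '' G.FE X := by
  induction hv with
  | base hv => exact Or.inl hv
  | @regular v hreg _ ih =>
    by_cases hvX : v ∈ X
    · exact Or.inl hvX
    obtain ⟨e, rfl⟩ := hreg.2
    rcases ih e rfl with hr | ⟨α, hα, hαsrc⟩
    · exact Or.inr ⟨_, singleton_mem_FE hvX hr, rfl⟩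
    · exact Or.inr ⟨_, cons_mem_FE hα hvX hαsrc, rfl⟩

end DirGraph

/-- for a cycle without exits `c`, if `F_E(c⁰)` is finite then the
saturated closure of `c⁰` is finite. -/
theorem satClosure_finite_of_FE_finite (G : DirGraph) (c : Walk G)
    (hc : G.IsCycle c) (hne : G.NoExits c)
    (hfin : (G.FE (G.verts c)).Finite) :
    (G.satClosure (G.verts c)).Finite := by
  have hclosed : ∀ e, G.s e ∈ G.verts c → G.r e ∈ G.verts c :=
    fun _ => G.rng_mem_verts_of_noExits hc.1 hc.2.2.1 hne
  refine ((G.verts_finite c).union (hfin.image Walk.src)).subset ?_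
  exact (G.satClosure_subset_saturation hclosed).trans
    fun _ hv => DirGraph.mem_or_mem_src_FE_of_saturation hv
end

section
/- Let E be a directed graph and U a compact open invariant subset of the unit space of the graph groupoid G_E. Then U is the disjoint union of the (finitely many) minimal compact open invariant subsets contained in U. -/
namespace DirGraph
variable (G : DirGraph)

/-- A generalized path: either a finite walk or an infinite edge sequence. -/
def BP : Type := Walk G ⊕ (ℕ → G.E)

/-- Source of a generalized path. -/
def bsrc : G.BP → G.V
  | .inl α => α.src
  | .inr x => G.s (x 0)

/-- A sink: a vertex emitting no edges. -/
def IsSink (v : G.V) : Prop := ∀ e, G.s e ≠ v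

/-- An infinite emitter. -/
def InfEmitter (v : G.V) : Prop := {e | G.s e = v}.Infinite

/-- A boundary path: an infinite path, or a finite path ending at a sink or an
infinite emitter. -/
def IsBoundary : G.BP → Prop
  | .inl α => G.IsPath α ∧ (G.IsSink α.rng ∨ G.InfEmitter α.rng)
  | .inr x => G.IsInfPath x

/-- The boundary path space `X` of the graph. -/
def XB : Type := {p : G.BP // G.IsBoundary p}

/-- The set of generalized paths extending a finite walk `μ`. -/
def extends' (μ : Walk G) : Set G.BP :=
  {p | G.bsrc p = μ.src ∧ (match p with
    | .inl α => μ.edges <+: α.edges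
    | .inr x => List.ofFn (fun i : Fin μ.edges.length => x i) = μ.edges)}

/-- The cylinder set `Z(μ)` in the boundary path space. -/
def Zset (μ : Walk G) : Set G.XB := {x | x.1 ∈ G.extends' μ}

/-- The basic set `Z(μ ∖ F)`. -/
def Zminus (μ : Walk G) (F : Set G.E) : Set G.XB :=
  G.Zset μ \ ⋃ e ∈ F, G.Zset ⟨μ.src, μ.edges ++ [e]⟩

/-- The cylinder-set topology on the boundary path space. -/
instance XBtop : TopologicalSpace G.XB :=
  TopologicalSpace.generateFrom
    {S | ∃ (μ : Walk G) (F : Set G.E), G.IsPath μ ∧ F.Finite ∧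
          (∀ e ∈ F, G.s e = μ.rng) ∧ S = G.Zminus μ F}

/-- `e` is an edge occurring in a generalized path. -/
def edgeOf (e : G.E) : G.BP → Prop
  | .inl α => e ∈ α.edges
  | .inr x => ∃ i, x i = e

/-- `U_H`: boundary paths visiting `H` (with `r(x₀) := s(x)`). -/
def UH (H : Set G.V) : Set G.XB :=
  {x | G.bsrc x.1 ∈ H ∨ ∃ e, G.edgeOf e x.1 ∧ G.r e ∈ H}

/-- `U_S`: finite boundary paths with range in `S`. -/
def US (S : Set G.V) : Set G.XB :=
  {x | ∃ α : Walk G, x.1 = Sum.inl α ∧ α.rng ∈ S}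

/-- `U_{H,S} = U_H ⊔ U_S`. -/
def UHS (H S : Set G.V) : Set G.XB := G.UH H ∪ G.US S

/-- `F_α`: the edges emitted by `r(α)` with range outside `H`. -/
def Falpha (H : Set G.V) (α : Walk G) : Set G.E :=
  {e | G.s e = α.rng ∧ G.r e ∉ H}

/-- Concatenation of a finite walk with a generalized path. -/
def concatBP (μ : Walk G) : G.BP → G.BP
  | .inl α => .inl ⟨μ.src, μ.edges ++ α.edges⟩
  | .inr x => .inr (G.concatSeq μ x)

/-- Tail equivalence on the boundary path space: the equivalence induced by the graph
groupoid `G_E` on its unit space `X`. -/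
def TailEquiv (x y : G.XB) : Prop :=
  ∃ (μ ν : Walk G) (t : G.BP), G.IsPath μ ∧ G.IsPath ν ∧
    μ.rng = G.bsrc t ∧ ν.rng = G.bsrc t ∧
    x.1 = G.concatBP μ t ∧ y.1 = G.concatBP ν t

/-- Invariance of a subset of the unit space of the graph groupoid. -/
def InvariantX (U : Set G.XB) : Prop :=
  ∀ x y, G.TailEquiv x y → x ∈ U → y ∈ U

/-- Compact open invariant subsets of the unit space of the graph groupoid. -/
def COI (U : Set G.XB) : Prop := IsCompact U ∧ IsOpen U ∧ G.InvariantX U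

/-- Minimal compact open invariant subsets. -/
def MinCOI (U : Set G.XB) : Prop :=
  G.COI U ∧ U.Nonempty ∧ ∀ W, G.COI W → W ⊆ U → W = ∅ ∨ W = U

end DirGraph

/-!
A nonempty open invariant set contains a whole vertex cylinder `Z(v)`: some basic
neighbourhood `Z(μ ∖ F)` inside it contains a cylinder `Z(ν)`, and invariance lets one chop
off `ν`. As the `Z(v)` are nonempty, open and pairwise disjoint, a compact set contains only
finitely many of them, and whenever `W ⊊ M` are compact open invariant sets (closed, the space
being Hausdorff), both `W` and `M \ W` contain fewer of them than `M`. So a compact open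
invariant set containing `x` that contains the fewest vertex cylinders is minimal. Distinct
minimal sets are disjoint, and a compact set covered by disjoint nonempty open sets is covered
by finitely many of them.
-/

theorem IsCompact.finite_of_pairwise_disjoint_of_eq_sUnion {X : Type*} [TopologicalSpace X]
    {U : Set X} (hU : IsCompact U) {𝒮 : Set (Set X)} (hopen : ∀ V ∈ 𝒮, IsOpen V)
    (hne : ∀ V ∈ 𝒮, V.Nonempty) (hdisj : 𝒮.Pairwise Disjoint) (hcover : U = ⋃₀ 𝒮) :
    𝒮.Finite := by
  obtain ⟨𝒯, h𝒯𝒮, h𝒯, hU𝒯⟩ := hU.elim_finite_subcover_image (c := id) hopen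
    (by rw [hcover, Set.sUnion_eq_biUnion]; rfl)
  refine h𝒯.subset fun V hV => ?_
  obtain ⟨x, hx⟩ := hne V hV
  obtain ⟨W, hW, hxW⟩ := Set.mem_iUnion₂.1 (hU𝒯 (hcover ▸ Set.mem_sUnion_of_mem hx hV))
  by_contra hV𝒯
  have hVW : V ≠ W := fun h => hV𝒯 (h ▸ hW)
  exact Set.disjoint_left.1 (hdisj hV (h𝒯𝒮 hW) hVW) hx hxW

namespace DirGraph
variable {G : DirGraph}

open Filter Topology

/-! ### Finite paths -/

lemma walk_ext {p q : Walk G} (h₁ : p.src = q.src) (h₂ : p.edges = q.edges) : p = q := by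
  cases p; cases q; congr

lemma rng_of_edges_eq_nil {p : Walk G} (h : p.edges = []) : p.rng = p.src := by
  unfold Walk.rng; rw [h]; rfl

@[simp] lemma rng_nil (v : G.V) : Walk.rng (⟨v, []⟩ : Walk G) = v := rfl

lemma rng_of_getElem? {p : Walk G} {e : G.E}
    (h : p.edges[p.edges.length - 1]? = some e) : p.rng = G.r e := by
  unfold Walk.rng
  rw [List.getLast?_eq_getElem?, h]

@[simp] lemma rng_snoc (v : G.V) (l : List G.E) (e : G.E) :
    Walk.rng (⟨v, l ++ [e]⟩ : Walk G) = G.r e := by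
  unfold Walk.rng
  rw [List.getLast?_concat]

lemma rng_append {p q : Walk G} (h : p.rng = q.src) :
    Walk.rng ⟨p.src, p.edges ++ q.edges⟩ = q.rng := by
  rcases List.eq_nil_or_concat q.edges with hq | ⟨l, e, hq⟩
  · rw [hq, List.append_nil, rng_of_edges_eq_nil hq]
    exact h
  · rw [List.concat_eq_append] at hq
    rw [hq, ← List.append_assoc, rng_snoc]
    unfold Walk.rng
    rw [hq, List.getLast?_concat]

lemma isPath_iff {p : Walk G} :
    G.IsPath p ↔ (∀ e, p.edges[0]? = some e → G.s e = p.src) ∧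
      (∀ i e f, p.edges[i]? = some e → p.edges[i + 1]? = some f → G.r e = G.s f) := by
  unfold IsPath
  rw [List.head?_eq_getElem?]
  refine and_congr Iff.rfl ?_
  show List.IsChain _ p.edges ↔ _
  rw [List.isChain_iff_getElem]
  constructor
  · rintro h i e f he hf
    obtain ⟨hf', rfl⟩ := List.getElem?_eq_some_iff.1 hf
    obtain ⟨he', rfl⟩ := List.getElem?_eq_some_iff.1 he
    exact h i hf'
  · intro h i hi
    exact h i _ _ (List.getElem?_eq_getElem (by omega)) (List.getElem?_eq_getElem hi)

lemma isPath_nil (v : G.V) : G.IsPath ⟨v, []⟩ :=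
  isPath_iff.2 ⟨by simp, by simp⟩

lemma isPath_append {p q : Walk G} (hp : G.IsPath p) (hq : G.IsPath q)
    (h : p.rng = q.src) : G.IsPath ⟨p.src, p.edges ++ q.edges⟩ := by
  rw [isPath_iff] at hp hq ⊢
  constructor
  · intro e he
    rcases hpe : p.edges with _ | ⟨a, l⟩
    · rw [hpe, List.nil_append] at he
      rw [hq.1 e he, ← h, rng_of_edges_eq_nil hpe]
    · rw [List.getElem?_append_left (by simp [hpe])] at he
      exact hp.1 e he
  · intro i e f he hf
    rcases lt_trichotomy (i + 1) p.edges.length with h1 | h1 | h1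
    · rw [List.getElem?_append_left (by omega)] at he hf
      exact hp.2 i e f he hf
    · rw [List.getElem?_append_left (by omega)] at he
      rw [List.getElem?_append_right (by omega), h1, Nat.sub_self] at hf
      rw [hq.1 f hf, ← h, rng_of_getElem? (by rwa [show p.edges.length - 1 = i by omega])]
    · rw [List.getElem?_append_right (by omega)] at he hf
      rw [show i + 1 - p.edges.length = (i - p.edges.length) + 1 by omega] at hf
      exact hq.2 _ e f he hf

lemma isPath_snoc {p : Walk G} (hp : G.IsPath p) {e : G.E} (he : G.s e = p.rng) :
    G.IsPath ⟨p.src, p.edges ++ [e]⟩ := by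
  refine isPath_append hp (q := ⟨G.s e, [e]⟩) ?_ he.symm
  rw [isPath_iff]
  constructor
  · intro f hf; simp at hf; subst hf; rfl
  · intro i a b ha hb
    rcases i with _ | i <;> simp at ha hb

/-! ### Generalized paths -/

def edgeAt : G.BP → ℕ → Option G.E
  | .inl α, n => α.edges[n]?
  | .inr ξ, n => some (ξ n)

@[simp] lemma edgeAt_inl (α : Walk G) (n : ℕ) : edgeAt (.inl α) n = α.edges[n]? := rfl
@[simp] lemma edgeAt_inr (ξ : ℕ → G.E) (n : ℕ) : edgeAt (.inr ξ) n = some (ξ n) := rfl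

def prefixWalk : G.BP → ℕ → Walk G
  | .inl α, n => ⟨α.src, α.edges.take n⟩
  | .inr ξ, n => ⟨G.s (ξ 0), List.ofFn (fun i : Fin n => ξ i)⟩

@[simp] lemma prefixWalk_src (x : G.BP) (n : ℕ) : (prefixWalk x n).src = G.bsrc x := by
  cases x <;> rfl

lemma prefixWalk_edges_getElem? (x : G.BP) (n i : ℕ) :
    (prefixWalk x n).edges[i]? = if i < n then edgeAt x i else none := by
  cases x with
  | inl α => simp [prefixWalk, List.getElem?_take]
  | inr ξ => simp [prefixWalk, List.getElem?_ofFn]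

lemma edgeAt_isSome_of_le {x : G.BP} {n : ℕ} (h : (edgeAt x n).isSome) {i : ℕ} (hi : i ≤ n) :
    (edgeAt x i).isSome := by
  cases x with
  | inl α =>
    simp only [edgeAt_inl, isSome_getElem?] at h ⊢
    omega
  | inr ξ => simp

lemma prefixWalk_edges_length {x : G.BP} {n : ℕ} (h : ∀ i < n, (edgeAt x i).isSome) :
    (prefixWalk x n).edges.length = n := by
  cases x with
  | inl α =>
    have := h α.edges.length
    simp only [edgeAt_inl, isSome_getElem?, lt_self_iff_false, imp_false, not_lt] at this
    simp [prefixWalk, this]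
  | inr ξ => simp [prefixWalk]

lemma eq_of_edgeAt_eq {x y : G.XB} (hsrc : G.bsrc x.1 = G.bsrc y.1)
    (h : ∀ n, edgeAt x.1 n = edgeAt y.1 n) : x = y := by
  apply Subtype.ext
  rcases hx : x.1 with α | ξ <;> rcases hy : y.1 with β | ζ <;> rw [hx, hy] at hsrc h
  · exact congrArg Sum.inl (walk_ext hsrc (List.ext_getElem? h))
  · simpa using h α.edges.length
  · simpa using (h β.edges.length).symm
  · exact congrArg Sum.inr (funext fun n => by simpa using h n)

lemma prefixWalk_eq_of_edgeAt_eq {x y : G.BP} (hsrc : G.bsrc x = G.bsrc y) {n : ℕ}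
    (h : ∀ i < n, edgeAt x i = edgeAt y i) : prefixWalk x n = prefixWalk y n := by
  refine walk_ext (by simp [hsrc]) (List.ext_getElem? fun i => ?_)
  rw [prefixWalk_edges_getElem?, prefixWalk_edges_getElem?]
  split_ifs with hi
  · exact h i hi
  · rfl

lemma edgeAt_zero {x : G.BP} (hx : G.IsBoundary x) {e : G.E} (h : edgeAt x 0 = some e) :
    G.s e = G.bsrc x := by
  cases x with
  | inl α => exact (isPath_iff.1 hx.1).1 e h
  | inr ξ => cases h; rfl

lemma edgeAt_succ {x : G.BP} (hx : G.IsBoundary x) {i : ℕ} {e f : G.E}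
    (he : edgeAt x i = some e) (hf : edgeAt x (i + 1) = some f) : G.r e = G.s f := by
  cases x with
  | inl α => exact (isPath_iff.1 hx.1).2 i e f he hf
  | inr ξ => cases he; cases hf; exact hx i

lemma isPath_prefixWalk {x : G.BP} (hx : G.IsBoundary x) (n : ℕ) :
    G.IsPath (prefixWalk x n) := by
  rw [isPath_iff]
  constructor
  · intro e he
    rw [prefixWalk_edges_getElem?] at he
    split_ifs at he
    rw [prefixWalk_src]
    exact edgeAt_zero hx he
  · intro i e f he hf
    rw [prefixWalk_edges_getElem?] at he hf
    split_ifs at he hf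
    exact edgeAt_succ hx he hf

lemma s_eq_rng_prefixWalk {x : G.BP} (hx : G.IsBoundary x) {n : ℕ} {e : G.E}
    (h : edgeAt x n = some e) : G.s e = (prefixWalk x n).rng := by
  have hsome : (edgeAt x n).isSome := by rw [h]; rfl
  have hlen : (prefixWalk x n).edges.length = n :=
    prefixWalk_edges_length fun i hi => edgeAt_isSome_of_le hsome hi.le
  cases n with
  | zero =>
    rw [rng_of_edges_eq_nil (List.length_eq_zero_iff.1 hlen), prefixWalk_src]
    exact edgeAt_zero hx h
  | succ m =>
    obtain ⟨e', he'⟩ := Option.isSome_iff_exists.1 (edgeAt_isSome_of_le hsome m.le_succ)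
    have : (prefixWalk x (m + 1)).edges[(prefixWalk x (m + 1)).edges.length - 1]? = some e' := by
      rw [hlen, prefixWalk_edges_getElem?]
      simp [he']
    rw [rng_of_getElem? this]
    exact (edgeAt_succ hx he' h).symm

/-! ### Cylinder sets -/

lemma mem_Zset_iff {μ : Walk G} {y : G.XB} :
    y ∈ G.Zset μ ↔ G.bsrc y.1 = μ.src ∧
      ∀ i e, μ.edges[i]? = some e → edgeAt y.1 i = some e := by
  rcases y with ⟨β | ξ, hy⟩
  · show β.src = μ.src ∧ μ.edges <+: β.edges ↔ _
    refine and_congr Iff.rfl ⟨?_, fun h => ?_⟩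
    · rintro ⟨t, ht⟩ i e he
      simp [← ht, List.getElem?_append_left (List.getElem?_eq_some_iff.1 he).1, he]
    · rw [List.prefix_iff_eq_take]
      refine List.ext_getElem? fun n => ?_
      rw [List.getElem?_take]
      split_ifs with hn
      · rw [List.getElem?_eq_getElem hn]
        exact (h n _ (List.getElem?_eq_getElem hn)).symm
      · exact List.getElem?_eq_none (by omega)
  · show G.s (ξ 0) = μ.src ∧ List.ofFn _ = μ.edges ↔ _
    refine and_congr Iff.rfl ⟨fun h i e he => ?_, fun h => ?_⟩
    · obtain ⟨hi, rfl⟩ := List.getElem?_eq_some_iff.1 he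
      have := congrArg (fun l => l[i]?) h
      simpa [List.getElem?_ofFn, hi] using this
    · refine List.ext_getElem? fun n => ?_
      rw [List.getElem?_ofFn]
      split_ifs with hn
      · rw [List.getElem?_eq_getElem hn]
        simpa using h n _ (List.getElem?_eq_getElem hn)
      · exact (List.getElem?_eq_none (by omega)).symm

lemma mem_Zset_nil {v : G.V} {y : G.XB} : y ∈ G.Zset ⟨v, []⟩ ↔ G.bsrc y.1 = v := by
  simp [mem_Zset_iff]

lemma mem_Zset_prefixWalk (x : G.XB) (n : ℕ) : x ∈ G.Zset (prefixWalk x.1 n) := by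
  refine mem_Zset_iff.2 ⟨(prefixWalk_src x.1 n).symm, fun i e he => ?_⟩
  rw [prefixWalk_edges_getElem?] at he
  split_ifs at he
  exact he

lemma edgeAt_of_mem_Zset_prefixWalk {x z : G.XB} {n i : ℕ} (hz : z ∈ G.Zset (prefixWalk x.1 n))
    (hi : i < n) {e : G.E} (he : edgeAt x.1 i = some e) : edgeAt z.1 i = some e :=
  (mem_Zset_iff.1 hz).2 i e (by rw [prefixWalk_edges_getElem?, if_pos hi, he])

lemma mem_Zset_of_eq_inl {x : G.XB} {α : Walk G} (hα : x.1 = .inl α) : x ∈ G.Zset α :=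
  mem_Zset_iff.2 ⟨by rw [hα]; rfl, fun i e he => by rwa [hα]⟩

lemma Zset_prefixWalk_anti (x : G.BP) {m n : ℕ} (h : m ≤ n) :
    G.Zset (prefixWalk x n) ⊆ G.Zset (prefixWalk x m) := by
  intro y hy
  rw [mem_Zset_iff] at hy ⊢
  refine ⟨by simp [hy.1], fun i e he => hy.2 i e ?_⟩
  rw [prefixWalk_edges_getElem?] at he ⊢
  split_ifs at he with hi
  rwa [if_pos (by omega)]

lemma mem_Zset_snoc {μ : Walk G} {e : G.E} {y : G.XB} :
    y ∈ G.Zset ⟨μ.src, μ.edges ++ [e]⟩ ↔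
      y ∈ G.Zset μ ∧ edgeAt y.1 μ.edges.length = some e := by
  rw [mem_Zset_iff, mem_Zset_iff]
  constructor
  · rintro ⟨h1, h2⟩
    refine ⟨⟨h1, fun i f hf => h2 i f ?_⟩, h2 _ _ List.getElem?_concat_length⟩
    rwa [List.getElem?_append_left (List.getElem?_eq_some_iff.1 hf).1]
  · rintro ⟨⟨h1, h2⟩, h3⟩
    refine ⟨h1, fun i f hf => ?_⟩
    rcases lt_trichotomy i μ.edges.length with hi | rfl | hi
    · rw [List.getElem?_append_left hi] at hf
      exact h2 i f hf
    · rw [List.getElem?_concat_length, Option.some_inj] at hf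
      rwa [← hf]
    · simp [List.getElem?_eq_none (l := μ.edges ++ [e]) (by simp; omega)] at hf

lemma mem_Zminus_iff {μ : Walk G} {F : Set G.E} {y : G.XB} :
    y ∈ G.Zminus μ F ↔ y ∈ G.Zset μ ∧ ∀ e ∈ F, edgeAt y.1 μ.edges.length ≠ some e := by
  simp only [Zminus, Set.mem_sdiff, Set.mem_iUnion, not_exists, mem_Zset_snoc]
  grind

lemma Zminus_empty (μ : Walk G) : G.Zminus μ ∅ = G.Zset μ := by
  simp [Zminus]

lemma Zminus_anti (μ : Walk G) {F₁ F₂ : Set G.E} (h : F₁ ⊆ F₂) :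
    G.Zminus μ F₂ ⊆ G.Zminus μ F₁ := by
  intro y hy
  rw [mem_Zminus_iff] at hy ⊢
  exact ⟨hy.1, fun e he => hy.2 e (h he)⟩

lemma Zset_snoc_subset_Zminus {μ : Walk G} {e : G.E} {F : Set G.E} (he : e ∉ F) :
    G.Zset ⟨μ.src, μ.edges ++ [e]⟩ ⊆ G.Zminus μ F := by
  intro y hy
  rw [mem_Zset_snoc] at hy
  refine mem_Zminus_iff.2 ⟨hy.1, fun f hf => ?_⟩
  rw [hy.2, Ne, Option.some_inj]
  rintro rfl
  exact he hf

lemma isOpen_Zminus {μ : Walk G} {F : Set G.E} (hμ : G.IsPath μ) (hF : F.Finite)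
    (hsF : ∀ e ∈ F, G.s e = μ.rng) : IsOpen (G.Zminus μ F) :=
  TopologicalSpace.GenerateOpen.basic _ ⟨μ, F, hμ, hF, hsF, rfl⟩

lemma isOpen_Zset {μ : Walk G} (hμ : G.IsPath μ) : IsOpen (G.Zset μ) := by
  rw [← Zminus_empty]
  exact isOpen_Zminus hμ Set.finite_empty (by simp)

def ContainsBasicNhd (O : Set G.XB) (x : G.XB) : Prop :=
  (∀ ξ, x.1 = .inr ξ → ∃ n, G.Zset (prefixWalk x.1 n) ⊆ O) ∧
    (∀ α, x.1 = .inl α → ∃ F : Set G.E, F.Finite ∧ (∀ e ∈ F, G.s e = α.rng) ∧ G.Zminus α F ⊆ O)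

lemma ContainsBasicNhd.mono {O O' : Set G.XB} {x : G.XB} (h : ContainsBasicNhd O x)
    (hO : O ⊆ O') : ContainsBasicNhd O' x :=
  ⟨fun ξ hξ => (h.1 ξ hξ).imp fun _ hn => hn.trans hO,
    fun α hα => (h.2 α hα).imp fun _ hF => ⟨hF.1, hF.2.1, hF.2.2.trans hO⟩⟩

lemma ContainsBasicNhd.inter {O₁ O₂ : Set G.XB} {x : G.XB} (h₁ : ContainsBasicNhd O₁ x)
    (h₂ : ContainsBasicNhd O₂ x) : ContainsBasicNhd (O₁ ∩ O₂) x := by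
  constructor
  · intro ξ hξ
    obtain ⟨n₁, hn₁⟩ := h₁.1 ξ hξ
    obtain ⟨n₂, hn₂⟩ := h₂.1 ξ hξ
    exact ⟨max n₁ n₂, Set.subset_inter
      ((Zset_prefixWalk_anti x.1 (le_max_left _ _)).trans hn₁)
      ((Zset_prefixWalk_anti x.1 (le_max_right _ _)).trans hn₂)⟩
  · intro α hα
    obtain ⟨F₁, hF₁, hs₁, hsub₁⟩ := h₁.2 α hα
    obtain ⟨F₂, hF₂, hs₂, hsub₂⟩ := h₂.2 α hα
    refine ⟨F₁ ∪ F₂, hF₁.union hF₂, fun e he => he.elim (hs₁ e) (hs₂ e), Set.subset_inter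
      ((Zminus_anti α Set.subset_union_left).trans hsub₁)
      ((Zminus_anti α Set.subset_union_right).trans hsub₂)⟩

lemma Zset_prefixWalk_subset_Zminus {μ : Walk G} {F : Set G.E} {x : G.XB}
    (hx : x ∈ G.Zminus μ F) {e : G.E} (he : edgeAt x.1 μ.edges.length = some e) :
    G.Zset (prefixWalk x.1 (μ.edges.length + 1)) ⊆ G.Zminus μ F := by
  rw [mem_Zminus_iff, mem_Zset_iff] at hx
  intro y hy
  have hxy : ∀ i ≤ μ.edges.length, ∀ f, edgeAt x.1 i = some f → edgeAt y.1 i = some f :=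
    fun i hi f => edgeAt_of_mem_Zset_prefixWalk hy (Nat.lt_succ_of_le hi)
  have hsrc : G.bsrc y.1 = μ.src := by rw [(mem_Zset_iff.1 hy).1, prefixWalk_src, hx.1.1]
  refine mem_Zminus_iff.2 ⟨mem_Zset_iff.2 ⟨hsrc, ?_⟩, ?_⟩
  · exact fun i f hf => hxy i (List.getElem?_eq_some_iff.1 hf).1.le f (hx.1.2 i f hf)
  · rw [hxy _ le_rfl e he, ← he]
    exact hx.2

lemma containsBasicNhd_Zminus {μ : Walk G} {F : Set G.E} (hF : F.Finite)
    (hsF : ∀ e ∈ F, G.s e = μ.rng) {x : G.XB} (hx : x ∈ G.Zminus μ F) :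
    ContainsBasicNhd (G.Zminus μ F) x := by
  constructor
  · intro ξ hξ
    exact ⟨_, Zset_prefixWalk_subset_Zminus hx (e := ξ μ.edges.length) (by rw [hξ]; rfl)⟩
  · intro α hα
    have hμα : α.src = μ.src ∧ μ.edges <+: α.edges := by
      have h := (mem_Zminus_iff.1 hx).1
      simpa only [Zset, extends', Set.mem_ofPred_eq, hα, bsrc] using h
    rcases hμα.2.length_le.eq_or_lt with hlen | hlt
    · obtain rfl : μ = α := walk_ext hμα.1.symm (hμα.2.eq_of_length hlen)
      exact ⟨F, hF, hsF, subset_rfl⟩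
    · refine ⟨∅, Set.finite_empty, by simp, ?_⟩
      have hα' : prefixWalk x.1 α.edges.length = α := by
        rw [hα]; exact walk_ext rfl (List.take_length)
      rw [Zminus_empty, ← hα']
      exact (Zset_prefixWalk_anti x.1 hlt).trans
        (Zset_prefixWalk_subset_Zminus hx (by rw [hα, edgeAt_inl, List.getElem?_eq_getElem hlt]))

lemma containsBasicNhd_of_isOpen {O : Set G.XB} (hO : IsOpen O) {x : G.XB} (hx : x ∈ O) :
    ContainsBasicNhd O x := by
  induction hO generalizing x with
  | basic S hS =>
    obtain ⟨μ, F, -, hF, hsF, rfl⟩ := hS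
    exact containsBasicNhd_Zminus hF hsF hx
  | univ => exact ⟨fun _ _ => ⟨0, Set.subset_univ _⟩,
      fun _ _ => ⟨∅, Set.finite_empty, by simp, Set.subset_univ _⟩⟩
  | inter O₁ O₂ _ _ ih₁ ih₂ => exact (ih₁ hx.1).inter (ih₂ hx.2)
  | sUnion 𝒮 _ ih =>
    obtain ⟨T, hT, hxT⟩ := hx
    exact (ih T hT hxT).mono (Set.subset_sUnion_of_mem hT)

/-! ### Grafting a path in front of a boundary path -/

lemma isBoundary_concatBP {ν : Walk G} {z : G.BP} (hν : G.IsPath ν)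
    (hz : G.IsBoundary z) (hr : ν.rng = G.bsrc z) : G.IsBoundary (G.concatBP ν z) := by
  cases z with
  | inl β =>
    refine ⟨isPath_append hν hz.1 hr, ?_⟩
    rw [rng_append hr]
    exact hz.2
  | inr ξ =>
    intro i
    show G.r (G.concatSeq ν ξ i) = G.s (G.concatSeq ν ξ (i + 1))
    unfold concatSeq
    rcases lt_trichotomy (i + 1) ν.edges.length with h1 | h1 | h1
    · rw [dif_pos (show i < ν.edges.length by omega), dif_pos h1]
      exact (isPath_iff.1 hν).2 i _ _ (List.getElem?_eq_getElem _) (List.getElem?_eq_getElem _)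
    · rw [dif_pos (show i < ν.edges.length by omega), dif_neg (by omega),
        show i + 1 - ν.edges.length = 0 by omega]
      have : ν.rng = G.r (ν.edges.get ⟨i, by omega⟩) :=
        rng_of_getElem? (List.getElem?_eq_some_iff.2 ⟨by omega, by simp [← h1]⟩)
      rw [← this, hr]
      exact (edgeAt_zero hz rfl).symm
    · rw [dif_neg (by omega), dif_neg (by omega),
        show i + 1 - ν.edges.length = (i - ν.edges.length) + 1 by omega]
      exact hz (i - ν.edges.length)

lemma bsrc_concatBP {ν : Walk G} {z : G.BP} (hν : G.IsPath ν) (hr : ν.rng = G.bsrc z) :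
    G.bsrc (G.concatBP ν z) = ν.src := by
  cases z with
  | inl β => rfl
  | inr ξ =>
    show G.s (G.concatSeq ν ξ 0) = ν.src
    unfold concatSeq
    by_cases h0 : 0 < ν.edges.length
    · rw [dif_pos h0]
      exact (isPath_iff.1 hν).1 _ (List.getElem?_eq_getElem h0)
    · rw [dif_neg h0, Nat.zero_sub]
      rw [rng_of_edges_eq_nil (List.length_eq_zero_iff.1 (by omega))] at hr
      exact hr.symm

lemma edgeAt_concatBP (ν : Walk G) (z : G.BP) (i : ℕ) :
    edgeAt (G.concatBP ν z) i =
      if i < ν.edges.length then ν.edges[i]? else edgeAt z (i - ν.edges.length) := by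
  cases z with
  | inl β =>
    show (ν.edges ++ β.edges)[i]? = _
    split_ifs with h
    · exact List.getElem?_append_left h
    · exact List.getElem?_append_right (by omega)
  | inr ξ =>
    show some (G.concatSeq ν ξ i) = _
    unfold concatSeq
    split_ifs with h
    · exact (List.getElem?_eq_getElem h).symm
    · rfl

def graft (ν : Walk G) (z : G.XB) (hν : G.IsPath ν) (hr : ν.rng = G.bsrc z.1) : G.XB :=
  ⟨G.concatBP ν z.1, isBoundary_concatBP hν z.2 hr⟩

lemma graft_mem_Zset (ν : Walk G) (z : G.XB) (hν : G.IsPath ν) (hr : ν.rng = G.bsrc z.1) :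
    graft ν z hν hr ∈ G.Zset ν := by
  refine mem_Zset_iff.2 ⟨bsrc_concatBP hν hr, fun i f hf => ?_⟩
  show edgeAt (G.concatBP ν z.1) i = some f
  rw [edgeAt_concatBP, if_pos (List.getElem?_eq_some_iff.1 hf).1]
  exact hf

lemma tailEquiv_graft (ν : Walk G) (z : G.XB) (hν : G.IsPath ν) (hr : ν.rng = G.bsrc z.1) :
    G.TailEquiv (graft ν z hν hr) z := by
  refine ⟨ν, ⟨G.bsrc z.1, []⟩, z.1, hν, isPath_nil _, hr, rng_nil _, rfl, ?_⟩
  rcases z with ⟨β | ξ, hz⟩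
  · exact congrArg Sum.inl (walk_ext rfl (List.nil_append _).symm)
  · rfl

lemma TailEquiv.symm {x y : G.XB} (h : G.TailEquiv x y) : G.TailEquiv y x := by
  obtain ⟨μ, ν, t, h1, h2, h3, h4, h5, h6⟩ := h
  exact ⟨ν, μ, t, h2, h1, h4, h3, h6, h5⟩

lemma InvariantX.Zset_nil_rng_subset {W : Set G.XB} (hW : G.InvariantX W) {ν : Walk G}
    (hν : G.IsPath ν) (h : G.Zset ν ⊆ W) : G.Zset ⟨ν.rng, []⟩ ⊆ W := fun y hy =>
  hW _ y (tailEquiv_graft ν y hν (mem_Zset_nil.1 hy).symm) (h (graft_mem_Zset ..))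

/-- Extend a path from `v` edge by edge: either it reaches a sink or an infinite emitter, or
the extensions converge to an infinite path. -/
lemma exists_bsrc_eq (v : G.V) : ∃ x : G.XB, G.bsrc x.1 = v := by
  by_cases h : ∃ p : Walk G, G.IsPath p ∧ p.src = v ∧ (G.IsSink p.rng ∨ G.InfEmitter p.rng)
  · obtain ⟨p, hp, hsrc, hb⟩ := h
    exact ⟨⟨.inl p, hp, hb⟩, hsrc⟩
  push Not at h
  have hstep : ∀ p : Walk G, G.IsPath p → p.src = v → ∃ e, G.s e = p.rng := by
    intro p hp hsrc
    by_contra! hc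
    exact (h p hp hsrc).1 hc
  let T := {p : Walk G // G.IsPath p ∧ p.src = v}
  let next : T → G.E := fun p => (hstep p.1 p.2.1 p.2.2).choose
  have hnext : ∀ p : T, G.s (next p) = p.1.rng := fun p => (hstep p.1 p.2.1 p.2.2).choose_spec
  let step : T → T := fun p =>
    ⟨⟨p.1.src, p.1.edges ++ [next p]⟩, isPath_snoc p.2.1 (hnext p), p.2.2⟩
  let seq : ℕ → T := fun n => step^[n] ⟨⟨v, []⟩, isPath_nil v, rfl⟩
  have hrng : ∀ n, (seq (n + 1)).1.rng = G.r (next (seq n)) := by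
    intro n
    rw [show seq (n + 1) = step (seq n) from Function.iterate_succ_apply' step n _]
    exact rng_snoc _ _ _
  refine ⟨⟨.inr fun n => next (seq n), fun n => by rw [← hrng n, ← hnext]⟩, ?_⟩
  show G.s (next (seq 0)) = v
  exact hnext _

lemma Zset_nil_nonempty (v : G.V) : (G.Zset ⟨v, []⟩).Nonempty :=
  (exists_bsrc_eq v).imp fun _ hx => mem_Zset_nil.2 hx

/-! ### The boundary path space is Hausdorff -/

lemma disjoint_nhds_of_edgeAt_ne {x y : G.XB} {n : ℕ} {e f : G.E}
    (hx : edgeAt x.1 n = some e) (hy : edgeAt y.1 n = some f) (hef : e ≠ f) :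
    Disjoint (𝓝 x) (𝓝 y) := by
  refine disjoint_of_disjoint_of_mem (Set.disjoint_left.2 fun z hzx hzy => hef ?_)
    ((isOpen_Zset (isPath_prefixWalk x.2 (n + 1))).mem_nhds (mem_Zset_prefixWalk x _))
    ((isOpen_Zset (isPath_prefixWalk y.2 (n + 1))).mem_nhds (mem_Zset_prefixWalk y _))
  rw [← Option.some_inj, ← edgeAt_of_mem_Zset_prefixWalk hzx n.lt_succ_self hx,
    ← edgeAt_of_mem_Zset_prefixWalk hzy n.lt_succ_self hy]

/-- If `x` and `y` agree before index `n` and `y` stops there, then `y` is a finite path `β`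
of length `n`, and `Z(β ∖ {xₙ})` separates it from `Z(x₀ ⋯ xₙ)`. -/
lemma disjoint_nhds_of_edgeAt_eq_none {x y : G.XB} (hsrc : G.bsrc x.1 = G.bsrc y.1) {n : ℕ}
    (hagree : ∀ i < n, edgeAt x.1 i = edgeAt y.1 i) {e : G.E}
    (hx : edgeAt x.1 n = some e) (hy : edgeAt y.1 n = none) : Disjoint (𝓝 x) (𝓝 y) := by
  obtain ⟨β, hβ⟩ : ∃ β, y.1 = .inl β := by
    rcases hy' : y.1 with β | ζ
    · exact ⟨β, rfl⟩
    · simp [hy'] at hy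
  have hxsome : ∀ i ≤ n, (edgeAt x.1 i).isSome := fun i hi =>
    edgeAt_isSome_of_le (by rw [hx]; rfl) hi
  have hβn : β.edges.length = n := by
    rw [hβ, edgeAt_inl, List.getElem?_eq_none_iff] at hy
    refine hy.antisymm (not_lt.1 fun hlt => ?_)
    have := hxsome _ hlt.le
    rw [hagree _ hlt, hβ, edgeAt_inl, List.getElem?_eq_none le_rfl] at this
    exact Bool.false_ne_true this
  have hβpre : prefixWalk y.1 n = β := by
    rw [hβ]; exact walk_ext rfl (List.take_of_length_le hβn.le)
  have hse : G.s e = β.rng := by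
    rw [s_eq_rng_prefixWalk x.2 hx, prefixWalk_eq_of_edgeAt_eq hsrc hagree, hβpre]
  have hβpath : G.IsPath β := by
    have := y.2; rw [hβ] at this; exact this.1
  refine disjoint_of_disjoint_of_mem (s := G.Zset (prefixWalk x.1 (n + 1)))
    (t := G.Zminus β {e}) (Set.disjoint_left.2 fun z hzx hzy => ?_)
    ((isOpen_Zset (isPath_prefixWalk x.2 _)).mem_nhds (mem_Zset_prefixWalk x _))
    ((isOpen_Zminus hβpath (Set.finite_singleton e) (by simpa using hse)).mem_nhds ?_)
  · refine (mem_Zminus_iff.1 hzy).2 e rfl ?_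
    rw [hβn]
    exact edgeAt_of_mem_Zset_prefixWalk hzx n.lt_succ_self hx
  · refine mem_Zminus_iff.2 ⟨mem_Zset_of_eq_inl hβ, fun f _ => ?_⟩
    rw [hβ, edgeAt_inl, List.getElem?_eq_none le_rfl]
    exact nofun

instance : T2Space G.XB := by
  classical
  refine t2Space_iff_disjoint_nhds.2 fun x y hxy => ?_
  by_cases hsrc : G.bsrc x.1 = G.bsrc y.1
  · have hne : ∃ n, edgeAt x.1 n ≠ edgeAt y.1 n := by
      by_contra! h
      exact hxy (eq_of_edgeAt_eq hsrc h)
    have hagree : ∀ i < Nat.find hne, edgeAt x.1 i = edgeAt y.1 i := fun i hi =>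
      not_not.1 (Nat.find_min hne hi)
    have hn := Nat.find_spec hne
    rcases hx : edgeAt x.1 (Nat.find hne) with _ | e <;>
      rcases hy : edgeAt y.1 (Nat.find hne) with _ | f <;> rw [hx, hy] at hn
    · exact absurd rfl hn
    · exact (disjoint_nhds_of_edgeAt_eq_none hsrc.symm (fun i hi => (hagree i hi).symm) hy hx).symm
    · exact disjoint_nhds_of_edgeAt_eq_none hsrc hagree hx hy
    · exact disjoint_nhds_of_edgeAt_ne hx hy fun hef => hn (hef ▸ rfl)
  · refine disjoint_of_disjoint_of_mem (Set.disjoint_left.2 fun z hzx hzy => hsrc ?_)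
      ((isOpen_Zset (isPath_nil _)).mem_nhds (mem_Zset_nil.2 rfl))
      ((isOpen_Zset (isPath_nil _)).mem_nhds (mem_Zset_nil.2 rfl))
    rw [← mem_Zset_nil.1 hzx, ← mem_Zset_nil.1 hzy]

/-! ### Compact open invariant sets -/

lemma exists_Zset_nil_subset {W : Set G.XB} (hWo : IsOpen W) (hWi : G.InvariantX W)
    (hne : W.Nonempty) : ∃ v, G.Zset ⟨v, []⟩ ⊆ W := by
  obtain ⟨x, hx⟩ := hne
  obtain ⟨hinf, hfin⟩ := containsBasicNhd_of_isOpen hWo hx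
  rcases hx1 : x.1 with α | ξ
  · obtain ⟨F, hF, hFs, hFW⟩ := hfin α hx1
    have hb : G.IsPath α ∧ (G.IsSink α.rng ∨ G.InfEmitter α.rng) := by
      have := x.2; rwa [hx1] at this
    rcases hb.2 with hsink | hemit
    · obtain rfl : F = ∅ := Set.eq_empty_of_forall_notMem fun e he => hsink e (hFs e he)
      rw [Zminus_empty] at hFW
      exact ⟨_, hWi.Zset_nil_rng_subset hb.1 hFW⟩
    · obtain ⟨e, he, heF⟩ := (hemit.sdiff hF).nonempty
      have := hWi.Zset_nil_rng_subset (isPath_snoc hb.1 he)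
        ((Zset_snoc_subset_Zminus heF).trans hFW)
      exact ⟨G.r e, by simpa using this⟩
  · obtain ⟨n, hn⟩ := hinf ξ hx1
    exact ⟨_, hWi.Zset_nil_rng_subset (isPath_prefixWalk x.2 n) hn⟩

lemma finite_setOf_Zset_nil_subset {U : Set G.XB} (hU : IsCompact U) :
    {v | G.Zset ⟨v, []⟩ ⊆ U}.Finite := by
  obtain ⟨t, ht⟩ := hU.elim_finite_subcover (fun v => G.Zset ⟨v, []⟩)
    (fun v => isOpen_Zset (isPath_nil v)) (fun x _ => Set.mem_iUnion.2 ⟨_, mem_Zset_nil.2 rfl⟩)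
  refine t.finite_toSet.subset fun v hv => ?_
  obtain ⟨y, hy⟩ := Zset_nil_nonempty v
  obtain ⟨w, hw, hyw⟩ := Set.mem_iUnion₂.1 (ht (hv hy))
  rwa [show v = w by rw [← mem_Zset_nil.1 hy, mem_Zset_nil.1 hyw]]

lemma setOf_Zset_nil_subset_ssubset {W M : Set G.XB} (hWM : W ⊆ M) (ho : IsOpen (M \ W))
    (hi : G.InvariantX (M \ W)) (hne : (M \ W).Nonempty) :
    {v | G.Zset ⟨v, []⟩ ⊆ W} ⊂ {v | G.Zset ⟨v, []⟩ ⊆ M} := by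
  refine Set.ssubset_iff_exists.2 ⟨fun v hv => hv.trans hWM, ?_⟩
  obtain ⟨v, hv⟩ := exists_Zset_nil_subset ho hi hne
  obtain ⟨y, hy⟩ := Zset_nil_nonempty v
  exact ⟨v, hv.trans Set.sdiff_subset, fun hvW => (hv hy).2 (hvW hy)⟩

lemma InvariantX.inter {W₁ W₂ : Set G.XB} (h₁ : G.InvariantX W₁) (h₂ : G.InvariantX W₂) :
    G.InvariantX (W₁ ∩ W₂) := fun a b hab ha => ⟨h₁ a b hab ha.1, h₂ a b hab ha.2⟩

lemma InvariantX.diff {W₁ W₂ : Set G.XB} (h₁ : G.InvariantX W₁) (h₂ : G.InvariantX W₂) :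
    G.InvariantX (W₁ \ W₂) := fun a b hab ha =>
  ⟨h₁ a b hab ha.1, fun hb => ha.2 (h₂ b a hab.symm hb)⟩

lemma COI.inter {W₁ W₂ : Set G.XB} (h₁ : G.COI W₁) (h₂ : G.COI W₂) : G.COI (W₁ ∩ W₂) :=
  ⟨h₁.1.inter_right h₂.1.isClosed, h₁.2.1.inter h₂.2.1, h₁.2.2.inter h₂.2.2⟩

lemma COI.diff {W₁ W₂ : Set G.XB} (h₁ : G.COI W₁) (h₂ : G.COI W₂) : G.COI (W₁ \ W₂) :=
  ⟨h₁.1.diff h₂.2.1, h₁.2.1.sdiff h₂.1.isClosed, h₁.2.2.diff h₂.2.2⟩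

lemma exists_minCOI_mem {U : Set G.XB} (hU : G.COI U) {x : G.XB} (hx : x ∈ U) :
    ∃ M ⊆ U, G.MinCOI M ∧ x ∈ M := by
  obtain ⟨M, ⟨hM, hMU, hxM⟩, hmin⟩ :=
    (measure fun W : Set G.XB => {v | G.Zset ⟨v, []⟩ ⊆ W}.ncard).wf.has_min
      {W | G.COI W ∧ W ⊆ U ∧ x ∈ W} ⟨U, hU, subset_rfl, hx⟩
  refine ⟨M, hMU, ⟨hM, ⟨x, hxM⟩, fun W hW hWM => ?_⟩, hxM⟩
  by_contra! hWne
  have hfin := finite_setOf_Zset_nil_subset hM.1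
  by_cases hxW : x ∈ W
  · have hMW : (M \ W).Nonempty := Set.sdiff_nonempty.2 fun h => hWne.2 (hWM.antisymm h)
    exact hmin W ⟨hW, hWM.trans hMU, hxW⟩ (Set.ncard_lt_ncard
      (setOf_Zset_nil_subset_ssubset hWM (hM.diff hW).2.1 (hM.diff hW).2.2 hMW) hfin)
  · have hD := hM.diff hW
    have hMD : (M \ (M \ W)).Nonempty := by
      rw [Set.sdiff_sdiff_cancel_left hWM]; exact hWne.1
    exact hmin (M \ W) ⟨hD, Set.sdiff_subset.trans hMU, hxM, hxW⟩ (Set.ncard_lt_ncard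
      (setOf_Zset_nil_subset_ssubset Set.sdiff_subset (hM.diff hD).2.1 (hM.diff hD).2.2 hMD) hfin)

lemma MinCOI.eq_of_not_disjoint {V₁ V₂ : Set G.XB} (h₁ : G.MinCOI V₁) (h₂ : G.MinCOI V₂)
    (h : ¬ Disjoint V₁ V₂) : V₁ = V₂ := by
  have hI := h₁.1.inter h₂.1
  have hne : V₁ ∩ V₂ ≠ ∅ := Set.nonempty_iff_ne_empty.1 (Set.not_disjoint_iff_nonempty_inter.1 h)
  exact ((h₁.2.2 _ hI Set.inter_subset_left).resolve_left hne).symm.trans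
    ((h₂.2.2 _ hI Set.inter_subset_right).resolve_left hne)

end DirGraph

/-- every compact open invariant subset of the unit space of the graph
groupoid is the disjoint union of the finitely many minimal compact open invariant
subsets it contains. -/
theorem coi_eq_sUnion_minimal (G : DirGraph) (U : Set G.XB) (hU : G.COI U) :
    {V | V ⊆ U ∧ G.MinCOI V}.Finite ∧
      U = ⋃₀ {V | V ⊆ U ∧ G.MinCOI V} ∧
      {V | V ⊆ U ∧ G.MinCOI V}.Pairwise Disjoint := by
  have hcover : U = ⋃₀ {V | V ⊆ U ∧ G.MinCOI V} := by
    refine (Set.sUnion_subset fun V hV => hV.1).antisymm' fun x hx => ?_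
    obtain ⟨M, hMU, hM, hxM⟩ := DirGraph.exists_minCOI_mem hU hx
    exact ⟨M, ⟨hMU, hM⟩, hxM⟩
  have hdisj : {V | V ⊆ U ∧ G.MinCOI V}.Pairwise Disjoint := fun V₁ h₁ V₂ h₂ hne =>
    by_contra fun h => hne (h₁.2.eq_of_not_disjoint h₂.2 h)
  exact ⟨hU.1.finite_of_pairwise_disjoint_of_eq_sUnion (fun V hV => hV.2.1.2.1)
    (fun V hV => hV.2.2.1) hdisj hcover, hcover, hdisj⟩
end
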